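/- arXiv:2605.21711 — 3 statements merged into one kernel-verified Lean document; each statement's English description precedes it below -/
import Mathlib

section
/- Let E be a Banach space with the primary factorisation property, and let T, S ∈ B(E). If the identity Id_E factors through neither T nor S, then Id_E does not factor through T + S. (Equivalently, the set of operators through which the identity does not factor is closed under addition.) -/
/-!
If `a (t + s) b = 1`, then `1 - a t b = a s b`. The primary factorisation property applied
to `a t b` makes the identity factor through `a t b` or through `a s b`, hence through `t`
or through `s`.
-/

def OneFactorsThrough {R : Type*} [Monoid R] (t : R) : Prop :=
  ∃ a b : R, a * t * b = 1

namespace OneFactorsThrough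

theorem of_mul_mul {R : Type*} [Monoid R] {a t b : R}
    (h : OneFactorsThrough (a * t * b)) : OneFactorsThrough t := by
  obtain ⟨c, d, hcd⟩ := h
  exact ⟨c * a, b * d, by simpa only [mul_assoc] using hcd⟩

theorem or_of_add {R : Type*} [Ring R]
    (hP : ∀ u : R, OneFactorsThrough u ∨ OneFactorsThrough (1 - u)) {t s : R}
    (h : OneFactorsThrough (t + s)) : OneFactorsThrough t ∨ OneFactorsThrough s := by
  obtain ⟨a, b, hab⟩ := h
  have hcompl : 1 - a * t * b = a * s * b := by
    rw [← hab]; noncomm_ring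
  rcases hP (a * t * b) with ht | hs
  · exact .inl (of_mul_mul ht)
  · rw [hcompl] at hs
    exact .inr (of_mul_mul hs)

end OneFactorsThrough

theorem not_factors_add_general
    {E : Type*} [NormedAddCommGroup E] [NormedSpace ℝ E]
    (hPFP : ∀ T : E →L[ℝ] E,
      (∃ A B : E →L[ℝ] E, A * T * B = 1) ∨ (∃ A B : E →L[ℝ] E, A * (1 - T) * B = 1))
    (T S : E →L[ℝ] E)
    (hT : ¬ ∃ A B : E →L[ℝ] E, A * T * B = 1)
    (hS : ¬ ∃ A B : E →L[ℝ] E, A * S * B = 1) :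
    ¬ ∃ A B : E →L[ℝ] E, A * (T + S) * B = 1 := fun hTS =>
  (OneFactorsThrough.or_of_add hPFP hTS).elim hT hS

/-- In a Banach space `E` with the primary factorisation property,
if the identity factors through neither `T` nor `S`, then it does not factor through
`T + S`. (Multiplication in `E →L[ℝ] E` is composition, `1` is the identity.) -/
theorem not_factors_add
    {E : Type*} [NormedAddCommGroup E] [NormedSpace ℝ E] [CompleteSpace E]
    (hPFP : ∀ T : E →L[ℝ] E,
      (∃ A B : E →L[ℝ] E, A * T * B = 1) ∨ (∃ A B : E →L[ℝ] E, A * (1 - T) * B = 1))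
    (T S : E →L[ℝ] E)
    (hT : ¬ ∃ A B : E →L[ℝ] E, A * T * B = 1)
    (hS : ¬ ∃ A B : E →L[ℝ] E, A * S * B = 1) :
    ¬ ∃ A B : E →L[ℝ] E, A * (T + S) * B = 1 :=
  not_factors_add_general hPFP T S hT hS
end

section
/- Let (x_n) be a sequence in ℓ∞ such that for some K > 0 and every finite set F ⊆ ℕ and scalars (λ_n)_{n∈F}, ‖Σ_{n∈F} λ_n x_n‖ ≤ K · max_{n∈F} |λ_n|. Then for every m ∈ ℕ, the sequence of m-th coordinates satisfies lim_{n→∞} x_n(m) = 0. -/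
/-! Testing a `c₀`-dominated sequence against a functional `φ` with the signs of the `φ (x n)`
as coefficients gives `∑_{n ∈ F} |φ (x n)| ≤ K ‖φ‖` for every finite `F`. So `φ (x n)` is
absolutely summable and in particular tends to `0`; the coordinates of `ℓ∞` are such functionals. -/

open Filter Topology

section Dominated

variable {E : Type*} [NormedAddCommGroup E] [NormedSpace ℝ E] {x : ℕ → E} {K : ℝ}

theorem sum_abs_apply_le_of_dominated
    (hdom : ∀ (F : Finset ℕ) (l : ℕ → ℝ) (c : ℝ), (∀ n ∈ F, |l n| ≤ c) →
      ‖∑ n ∈ F, l n • x n‖ ≤ K * c)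
    (φ : StrongDual ℝ E) (F : Finset ℕ) : ∑ n ∈ F, |φ (x n)| ≤ K * ‖φ‖ := by
  have hsign : ∀ n ∈ F, |(SignType.sign (φ (x n)) : ℝ)| ≤ 1 := fun n _ => by
    rcases SignType.sign (φ (x n)) with _ | _ | _ <;> simp
  calc ∑ n ∈ F, |φ (x n)| = φ (∑ n ∈ F, (SignType.sign (φ (x n)) : ℝ) • x n) := by
        simp only [map_sum, map_smul, smul_eq_mul, sign_mul_self]
    _ ≤ ‖φ‖ * ‖∑ n ∈ F, (SignType.sign (φ (x n)) : ℝ) • x n‖ :=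
        (le_abs_self _).trans (φ.le_opNorm _)
    _ ≤ ‖φ‖ * (K * 1) := by gcongr; exact hdom F _ 1 hsign
    _ = K * ‖φ‖ := by ring

theorem tendsto_apply_zero_of_dominated
    (hdom : ∀ (F : Finset ℕ) (l : ℕ → ℝ) (c : ℝ), (∀ n ∈ F, |l n| ≤ c) →
      ‖∑ n ∈ F, l n • x n‖ ≤ K * c)
    (φ : StrongDual ℝ E) : Tendsto (fun n => φ (x n)) atTop (𝓝 0) :=
  (summable_of_sum_le (fun n => abs_nonneg (φ (x n)))
    (sum_abs_apply_le_of_dominated hdom φ)).of_abs.tendsto_atTop_zero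

end Dominated

theorem linfty_coord_tendsto_zero_general
    (x : ℕ → lp (fun _ : ℕ => ℝ) ⊤) (K : ℝ)
    (hdom : ∀ (F : Finset ℕ) (l : ℕ → ℝ) (c : ℝ), (∀ n ∈ F, |l n| ≤ c) →
      ‖∑ n ∈ F, l n • x n‖ ≤ K * c) :
    ∀ m : ℕ, Filter.Tendsto (fun n => (x n : ∀ _ : ℕ, ℝ) m) Filter.atTop (nhds 0) :=
  fun m => tendsto_apply_zero_of_dominated hdom (lp.evalCLM ℝ (fun _ : ℕ => ℝ) ⊤ m)

/-- If `(x n)` is a sequence in `ℓ∞` whose finite linear combinations are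
dominated by `K` times the maximum of the coefficients, then each coordinate sequence
`n ↦ x n m` tends to `0`. -/
theorem linfty_coord_tendsto_zero
    (x : ℕ → lp (fun _ : ℕ => ℝ) ⊤) (K : ℝ) (hK : 0 < K)
    (hdom : ∀ (F : Finset ℕ) (l : ℕ → ℝ) (c : ℝ), (∀ n ∈ F, |l n| ≤ c) →
      ‖∑ n ∈ F, l n • x n‖ ≤ K * c) :
    ∀ m : ℕ, Filter.Tendsto (fun n => (x n : ∀ _ : ℕ, ℝ) m) Filter.atTop (nhds 0) :=
  linfty_coord_tendsto_zero_general x K hdom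
end

section
/- Let X be quasi-reflexive of order one and X = Y ⊕ Z a direct sum decomposition into closed subspaces. Then exactly one of Y, Z is reflexive, and the non-reflexive summand W satisfies dim(W**/κ_W(W)) = 1 (it is quasi-reflexive of order one). -/
/-!
Composing twice with a continuous linear map `f` gives the bidual map `f**`, which commutes with
the canonical embeddings; hence `f ↦ f**` descends to a linear map between the quotients
`E**/κ(E)`, and this is additive and functorial in `f`. Since `Y` and `Z` are closed and `X` is
complete, the projections onto them are continuous (open mapping theorem), so `X` is a biproduct
of `Y` and `Z` in the category of normed spaces; an additive functor preserves biproducts, giving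
`X**/κ(X) ≃ Y**/κ(Y) × Z**/κ(Z)`. The two ranks therefore add up to `1`: one of them is `0`, so
that summand is reflexive, and the other is `1`.
-/

namespace NormedSpace

section bidualMap

variable {𝕜 E F G : Type*} [NontriviallyNormedField 𝕜]
  [NormedAddCommGroup E] [NormedSpace 𝕜 E] [NormedAddCommGroup F] [NormedSpace 𝕜 F]
  [NormedAddCommGroup G] [NormedSpace 𝕜 G]

def bidualMap (f : E →L[𝕜] F) :
    StrongDual 𝕜 (StrongDual 𝕜 E) →L[𝕜] StrongDual 𝕜 (StrongDual 𝕜 F) :=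
  ContinuousLinearMap.precomp 𝕜 (ContinuousLinearMap.precomp 𝕜 f)

@[simp] lemma bidualMap_apply (f : E →L[𝕜] F) (Φ : StrongDual 𝕜 (StrongDual 𝕜 E))
    (g : StrongDual 𝕜 F) : bidualMap f Φ g = Φ (g ∘L f) := rfl

lemma bidualMap_id : bidualMap (.id 𝕜 E) = .id 𝕜 _ := rfl

lemma bidualMap_comp (g : F →L[𝕜] G) (f : E →L[𝕜] F) :
    bidualMap (g ∘L f) = bidualMap g ∘L bidualMap f := rfl

lemma bidualMap_add_apply (f g : E →L[𝕜] F) (Φ : StrongDual 𝕜 (StrongDual 𝕜 E)) :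
    bidualMap (f + g) Φ = bidualMap f Φ + bidualMap g Φ := by
  ext h
  simp [ContinuousLinearMap.comp_add]

lemma bidualMap_zero : bidualMap (0 : E →L[𝕜] F) = 0 := by
  ext Φ h
  simp

lemma bidualMap_inclusionInDoubleDual (f : E →L[𝕜] F) (x : E) :
    bidualMap f (inclusionInDoubleDual 𝕜 E x) = inclusionInDoubleDual 𝕜 F (f x) := rfl

end bidualMap

section BidualQuotient

/- Over a general `𝕜`, instance search does not find the `HasQuotient` instance for submodules
of the bidual, so the quotient is only set up over `ℝ`. -/

variable {E F G : Type*} [NormedAddCommGroup E] [NormedSpace ℝ E]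
  [NormedAddCommGroup F] [NormedSpace ℝ F] [NormedAddCommGroup G] [NormedSpace ℝ G]

variable (E) in
abbrev BidualQuotient : Type _ :=
  StrongDual ℝ (StrongDual ℝ E) ⧸ LinearMap.range (inclusionInDoubleDual ℝ E).toLinearMap

noncomputable def bidualQuotientMap (f : E →L[ℝ] F) : BidualQuotient E →ₗ[ℝ] BidualQuotient F :=
  Submodule.mapQ _ _ (bidualMap f).toLinearMap <| by
    rintro _ ⟨x, rfl⟩
    exact ⟨f x, (bidualMap_inclusionInDoubleDual f x).symm⟩

@[simp] lemma bidualQuotientMap_mk (f : E →L[ℝ] F) (Φ : StrongDual ℝ (StrongDual ℝ E)) :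
    bidualQuotientMap f (Submodule.Quotient.mk Φ) = Submodule.Quotient.mk (bidualMap f Φ) := rfl

lemma bidualQuotientMap_id : bidualQuotientMap (.id ℝ E) = .id := by
  ext
  simp [bidualMap_id]

lemma bidualQuotientMap_comp (g : F →L[ℝ] G) (f : E →L[ℝ] F) :
    bidualQuotientMap (g ∘L f) = bidualQuotientMap g ∘ₗ bidualQuotientMap f := by
  ext
  simp [bidualMap_comp]

lemma bidualQuotientMap_add (f g : E →L[ℝ] F) :
    bidualQuotientMap (f + g) = bidualQuotientMap f + bidualQuotientMap g := by
  ext Φ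
  simp [bidualMap_add_apply]

lemma bidualQuotientMap_zero : bidualQuotientMap (0 : E →L[ℝ] F) = 0 := by
  ext Φ
  simp [bidualMap_zero]

variable (E) in
lemma rank_bidualQuotient_eq_zero_iff :
    Module.rank ℝ (BidualQuotient E) = 0 ↔ Function.Surjective (inclusionInDoubleDual ℝ E) :=
  rank_zero_iff.trans <| Submodule.Quotient.subsingleton_iff.trans LinearMap.range_eq_top

noncomputable def bidualQuotientEquivProdOfBiproduct {X Y Z : Type*}
    [NormedAddCommGroup X] [NormedSpace ℝ X] [NormedAddCommGroup Y] [NormedSpace ℝ Y] [NormedAddCommGroup Z] [NormedSpace ℝ Z]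
    (i : Y →L[ℝ] X) (j : Z →L[ℝ] X) (p : X →L[ℝ] Y) (q : X →L[ℝ] Z)
    (hpi : p ∘L i = .id ℝ Y) (hqj : q ∘L j = .id ℝ Z) (hpj : p ∘L j = 0) (hqi : q ∘L i = 0)
    (hsum : i ∘L p + j ∘L q = .id ℝ X) :
    BidualQuotient X ≃ₗ[ℝ] BidualQuotient Y × BidualQuotient Z :=
  .ofLinearMap ((bidualQuotientMap p).prod (bidualQuotientMap q))
    ((bidualQuotientMap i).coprod (bidualQuotientMap j))
    (by
      simp only [LinearMap.prod_comp, LinearMap.comp_coprod, ← bidualQuotientMap_comp, hpi, hqj,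
        hpj, hqi, bidualQuotientMap_id, bidualQuotientMap_zero, LinearMap.coprod_zero_right,
        LinearMap.coprod_zero_left, LinearMap.id_comp, LinearMap.pair_fst_snd])
    (by
      rw [LinearMap.coprod_comp_prod, ← bidualQuotientMap_comp, ← bidualQuotientMap_comp,
        ← bidualQuotientMap_add, hsum, bidualQuotientMap_id])

end BidualQuotient

section IsTopCompl

variable {X : Type*} [NormedAddCommGroup X] [NormedSpace ℝ X] {Y Z : Subspace ℝ X}

noncomputable def bidualQuotientEquivProdOfIsTopCompl (h : Y.IsTopCompl Z) :
    BidualQuotient X ≃ₗ[ℝ] BidualQuotient Y × BidualQuotient Z :=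
  bidualQuotientEquivProdOfBiproduct Y.subtypeL Z.subtypeL (Y.projectionOntoL Z h)
    (Z.projectionOntoL Y h.symm)
    (by ext y; simp [Submodule.projectionOntoL_apply_left])
    (by ext z; simp [Submodule.projectionOntoL_apply_left])
    (by ext z; simp [Submodule.projectionOntoL_apply_right])
    (by ext y; simp [Submodule.projectionOntoL_apply_right])
    (Submodule.projectionL_add_projectionL_eq_id h)

lemma rank_bidualQuotient_eq_add_of_isTopCompl (h : Y.IsTopCompl Z) :
    Module.rank ℝ (BidualQuotient X) =
      Module.rank ℝ (BidualQuotient Y) + Module.rank ℝ (BidualQuotient Z) :=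
  have := Module.Free.of_divisionRing ℝ (BidualQuotient Y)
  have := Module.Free.of_divisionRing ℝ (BidualQuotient Z)
  (bidualQuotientEquivProdOfIsTopCompl h).rank_eq.trans (rank_prod' ..)

end IsTopCompl

end NormedSpace

theorem Cardinal.add_eq_one_iff {a b : Cardinal} : a + b = 1 ↔ a = 0 ∧ b = 1 ∨ a = 1 ∧ b = 0 := by
  refine ⟨fun h ↦ ?_, by rintro (⟨rfl, rfl⟩ | ⟨rfl, rfl⟩) <;> simp⟩
  have hab := add_lt_aleph0_iff.1 (h ▸ one_lt_aleph0)
  obtain ⟨m, rfl⟩ := lt_aleph0.1 hab.1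
  obtain ⟨n, rfl⟩ := lt_aleph0.1 hab.2
  norm_cast at h ⊢
  omega

open NormedSpace

/-- Let `X` be quasi-reflexive of order one and `X = Y ⊕ Z` a topological
direct sum decomposition into closed subspaces.  Then exactly one of `Y, Z` is reflexive
(canonical embedding into the bidual surjective), and the non-reflexive summand is itself
quasi-reflexive of order one. -/
theorem summand_quasiReflexive_of_quasiReflexive
    {X : Type*} [NormedAddCommGroup X] [NormedSpace ℝ X] [CompleteSpace X]
    (hX : Module.rank ℝ
      ((StrongDual ℝ (StrongDual ℝ X)) ⧸ LinearMap.range (inclusionInDoubleDual ℝ X).toLinearMap) = 1)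
    (Y Z : Subspace ℝ X)
    (hYc : IsClosed (Y : Set X)) (hZc : IsClosed (Z : Set X))
    (hcompl : IsCompl Y Z) :
    (Function.Surjective (inclusionInDoubleDual ℝ Y) ∧
      ¬ Function.Surjective (inclusionInDoubleDual ℝ Z) ∧
      Module.rank ℝ
        ((StrongDual ℝ (StrongDual ℝ Z)) ⧸ LinearMap.range (inclusionInDoubleDual ℝ Z).toLinearMap) = 1) ∨
    (¬ Function.Surjective (inclusionInDoubleDual ℝ Y) ∧
      Function.Surjective (inclusionInDoubleDual ℝ Z) ∧
      Module.rank ℝ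
        ((StrongDual ℝ (StrongDual ℝ Y)) ⧸ LinearMap.range (inclusionInDoubleDual ℝ Y).toLinearMap) = 1) := by
  have hYZ : Y.IsTopCompl Z := Submodule.IsCompl.isTopCompl_of_isClosed hcompl hYc hZc
  have hsum := (rank_bidualQuotient_eq_add_of_isTopCompl hYZ).symm.trans hX
  have not_surj {W : Subspace ℝ X} (hW : Module.rank ℝ (BidualQuotient W) = 1) :
      ¬ Function.Surjective (inclusionInDoubleDual ℝ W) := fun hs ↦ by
    simp [(rank_bidualQuotient_eq_zero_iff W).2 hs] at hW
  rcases Cardinal.add_eq_one_iff.1 hsum with ⟨hY, hZ⟩ | ⟨hY, hZ⟩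
  · exact .inl ⟨(rank_bidualQuotient_eq_zero_iff Y).1 hY, not_surj hZ, hZ⟩
  · exact .inr ⟨not_surj hY, (rank_bidualQuotient_eq_zero_iff Z).1 hZ, hY⟩
end
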